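/- arXiv:1810.05198 — 3 statements merged into one kernel-verified Lean document; each statement's English description precedes it below -/
import Mathlib

section
/- For every real number c with 0 < c < 1, the contour integral of e^{-πix²} along the line of slope −1 crossing the real axis at c, traversed from lower right to upper left, equals e^{3πi/4}; that is, ∫_{t∈ℝ} e^{-πi(c + e^{3πi/4}t)²} · e^{3πi/4} dt = e^{3πi/4}. -/
open Complex MeasureTheory

/-- The contour integral of `f` along the line of slope `-1` crossing the real
axis at `c`, traversed from lower right to upper left (direction `e^{3πi/4}`). -/
noncomputable def lineNW (c : ℝ) (f : ℂ → ℂ) : ℂ :=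
  ∫ t : ℝ, f (c + Complex.exp (3 * Real.pi * Complex.I / 4) * t) *
    Complex.exp (3 * Real.pi * Complex.I / 4)

theorem stmt_0 (c : ℝ) (hc0 : 0 < c) (hc1 : c < 1) :
    lineNW c (fun x => Complex.exp (-(Real.pi : ℂ) * Complex.I * x ^ 2)) =
      Complex.exp (3 * Real.pi * Complex.I / 4) := by
  set ω : ℂ := Complex.exp (3 * Real.pi * Complex.I / 4) with hωdef
  have hω : ω ^ 2 = -Complex.I := by
    rw [hωdef, ← Complex.exp_nat_mul]
    have h1 : (2 : ℕ) * (3 * (Real.pi : ℂ) * Complex.I / 4) =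
        ((Real.pi : ℝ) : ℂ) * Complex.I + ((Real.pi / 2 : ℝ) : ℂ) * Complex.I := by
      push_cast; ring
    rw [h1, Complex.exp_add, Complex.exp_pi_mul_I, Complex.exp_mul_I]
    rw [← Complex.ofReal_cos, ← Complex.ofReal_sin]
    simp [Real.cos_pi_div_two, Real.sin_pi_div_two]
  have hπ : (Real.pi : ℂ) ≠ 0 := by
    exact_mod_cast Real.pi_ne_zero
  have hb : (-(Real.pi : ℂ)).re < 0 := by
    simp [Real.pi_pos]
  have key : ∀ t : ℝ,
      Complex.exp (-(Real.pi : ℂ) * Complex.I * ((c : ℂ) + ω * t) ^ 2) * ω =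
      ω * Complex.exp (-(Real.pi : ℂ) * (t : ℂ) ^ 2 +
        (-2 * Real.pi * Complex.I * c * ω) * t + (-(Real.pi : ℂ) * Complex.I * c ^ 2)) := by
    intro t
    rw [mul_comm]
    congr 1
    congr 1
    linear_combination (-(Real.pi : ℂ) * Complex.I * (t : ℂ) ^ 2) * hω + ((Real.pi : ℂ) * (t : ℂ) ^ 2) * Complex.I_sq
  calc lineNW c (fun x => Complex.exp (-(Real.pi : ℂ) * Complex.I * x ^ 2))
      = ∫ t : ℝ, ω * Complex.exp (-(Real.pi : ℂ) * (t : ℂ) ^ 2 +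
        (-2 * Real.pi * Complex.I * c * ω) * t + (-(Real.pi : ℂ) * Complex.I * c ^ 2)) := by
        unfold lineNW
        exact integral_congr_ae (Filter.Eventually.of_forall key)
    _ = ω * ∫ t : ℝ, Complex.exp (-(Real.pi : ℂ) * (t : ℂ) ^ 2 +
        (-2 * Real.pi * Complex.I * c * ω) * t + (-(Real.pi : ℂ) * Complex.I * c ^ 2)) :=
        integral_const_mul ω _
    _ = ω := by
        rw [integral_cexp_quadratic hb]
        have h2 : ((Real.pi : ℂ) / -(-(Real.pi : ℂ))) = 1 := by
          rw [neg_neg, div_self hπ]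
        have hsq : (-2 * (Real.pi : ℂ) * Complex.I * c * ω) ^ 2 =
            4 * (Real.pi : ℂ) ^ 2 * Complex.I * c ^ 2 := by
          rw [mul_pow _ ω, hω]
          linear_combination (-4 * (Real.pi : ℂ) ^ 2 * c ^ 2 * Complex.I) * Complex.I_sq
        have h3 : (-(Real.pi : ℂ) * Complex.I * c ^ 2 -
            (-2 * Real.pi * Complex.I * c * ω) ^ 2 / (4 * -(Real.pi : ℂ))) = 0 := by
          rw [hsq]
          field_simp
          ring
        rw [h2, h3, Complex.one_cpow, Complex.exp_zero, mul_one, mul_one]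
end

section
/- For every complex number u and every real c with 0 < c < 1, the function Φ(u) = ∫_{0↖1} e^{-πix² + 2πiux}/(e^{πix} − e^{-πix}) dx satisfies the difference equation Φ(u+1) − Φ(u) = e^{πi(u+1/2)²} · e^{3πi/4}. -/
open Complex MeasureTheory

/-- Riemann's function `Φ(u) = ∫_{0↖1} e^{-πix² + 2πiux}/(e^{πix} − e^{-πix}) dx`. -/
noncomputable def Phi (c : ℝ) (u : ℂ) : ℂ :=
  lineNW c (fun x =>
    Complex.exp (-(Real.pi : ℂ) * Complex.I * x ^ 2 + 2 * Real.pi * Complex.I * u * x) /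
      (Complex.exp (Real.pi * Complex.I * x) - Complex.exp (-(Real.pi : ℂ) * Complex.I * x)))

noncomputable def riemannPhiAux.w : ℂ := Complex.exp (3 * Real.pi * Complex.I / 4)

lemma riemannPhiAux.hw2 : riemannPhiAux.w ^ 2 = -Complex.I := by
  rw [riemannPhiAux.w, ← Complex.exp_nat_mul]
  have h : (2:ℕ) * (3 * (Real.pi:ℂ) * Complex.I / 4) = Real.pi * Complex.I + ((Real.pi/2 : ℝ) : ℂ) * Complex.I := by
    push_cast; ring
  rw [h, Complex.exp_add, Complex.exp_pi_mul_I, Complex.exp_mul_I,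
    ← Complex.ofReal_cos, ← Complex.ofReal_sin, Real.cos_pi_div_two, Real.sin_pi_div_two]
  simp

lemma riemannPhiAux.hwim : (1:ℝ)/2 ≤ riemannPhiAux.w.im := by
  have h : (3 * (Real.pi:ℂ) * Complex.I / 4) = ((3*Real.pi/4 : ℝ):ℂ) * Complex.I := by push_cast; ring
  rw [riemannPhiAux.w, h, Complex.exp_ofReal_mul_I_im]
  have h2 : (3*Real.pi/4 : ℝ) = Real.pi - Real.pi/4 := by ring
  rw [h2, Real.sin_pi_sub, Real.sin_pi_div_four]
  nlinarith [Real.sq_sqrt (show (0:ℝ) ≤ 2 by norm_num), Real.sqrt_nonneg 2]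

lemma riemannPhiAux.hwnorm : ‖riemannPhiAux.w‖ = 1 := by
  rw [riemannPhiAux.w, Complex.norm_exp]
  norm_num

noncomputable def riemannPhiAux.XX (c t : ℝ) : ℂ := c + riemannPhiAux.w * t

lemma riemannPhiAux.hXim (c t : ℝ) : (riemannPhiAux.XX c t).im = riemannPhiAux.w.im * t := by
  simp [riemannPhiAux.XX]

noncomputable def riemannPhiAux.NN (c : ℝ) (v : ℂ) (t : ℝ) : ℂ :=
  Complex.exp (-(Real.pi : ℂ) * Complex.I * (riemannPhiAux.XX c t) ^ 2 + 2 * Real.pi * Complex.I * v * (riemannPhiAux.XX c t))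

noncomputable def riemannPhiAux.DD (c : ℝ) (t : ℝ) : ℂ :=
  Complex.exp (Real.pi * Complex.I * (riemannPhiAux.XX c t)) - Complex.exp (-(Real.pi : ℂ) * Complex.I * (riemannPhiAux.XX c t))

example (c : ℝ) (u : ℂ) :
    (lineNW c (fun x =>
    Complex.exp (-(Real.pi : ℂ) * Complex.I * x ^ 2 + 2 * Real.pi * Complex.I * u * x) /
      (Complex.exp (Real.pi * Complex.I * x) - Complex.exp (-(Real.pi : ℂ) * Complex.I * x)))) = ∫ t : ℝ, riemannPhiAux.NN c u t / riemannPhiAux.DD c t * riemannPhiAux.w := rfl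

lemma riemannPhiAux.quad (c : ℝ) (v : ℂ) (t : ℝ) :
    -(Real.pi : ℂ) * Complex.I * (riemannPhiAux.XX c t) ^ 2 + 2 * Real.pi * Complex.I * v * (riemannPhiAux.XX c t) =
      (-(Real.pi:ℂ)) * t^2 + (2*(Real.pi:ℂ)*Complex.I*(v-c)*riemannPhiAux.w)*t + (-(Real.pi:ℂ)*Complex.I*c^2 + 2*(Real.pi:ℂ)*Complex.I*v*c) := by
  simp only [riemannPhiAux.XX]
  linear_combination (-(Real.pi:ℂ)*Complex.I*(t:ℂ)^2) * riemannPhiAux.hw2 + ((Real.pi:ℂ)*(t:ℂ)^2) * Complex.I_sq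

lemma riemannPhiAux.hDne (c : ℝ) (hc0 : 0 < c) (hc1 : c < 1) (t : ℝ) : riemannPhiAux.DD c t ≠ 0 := by
  intro h
  rw [riemannPhiAux.DD, sub_eq_zero, Complex.exp_eq_exp_iff_exists_int] at h
  obtain ⟨n, hn⟩ := h
  -- π I x = -π I x + n * (2 π I)  →  x = n
  have hπ : (Real.pi : ℂ) ≠ 0 := Complex.ofReal_ne_zero.mpr Real.pi_ne_zero
  have hx : riemannPhiAux.XX c t = n := by
    have : 2 * (Real.pi:ℂ) * Complex.I * (riemannPhiAux.XX c t) = 2 * (Real.pi:ℂ) * Complex.I * n := by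
      linear_combination hn
    field_simp [Complex.I_ne_zero] at this
    exact_mod_cast this
  have him : (riemannPhiAux.XX c t).im = 0 := by rw [hx]; simp
  rw [riemannPhiAux.hXim] at him
  have hwim' : riemannPhiAux.w.im ≠ 0 := by have := riemannPhiAux.hwim; intro h; rw [h] at this; norm_num at this
  have ht : t = 0 := by
    rcases mul_eq_zero.mp him with h | h
    · exact absurd h hwim'
    · exact h
  rw [ht] at hx
  simp only [riemannPhiAux.XX, Complex.ofReal_zero, mul_zero, add_zero] at hx
  have : (c : ℝ) = (n : ℝ) := by exact_mod_cast hx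
  have h0 : (0:ℤ) < n := by exact_mod_cast this ▸ hc0
  have h1 : n < (1:ℤ) := by exact_mod_cast this ▸ hc1
  omega

lemma riemannPhiAux.hDlow (c : ℝ) (hc0 : 0 < c) (hc1 : c < 1) :
    ∃ m > 0, ∀ t : ℝ, m ≤ ‖riemannPhiAux.DD c t‖ := by
  have hcont : Continuous fun t => ‖riemannPhiAux.DD c t‖ := by
    apply Continuous.norm
    unfold riemannPhiAux.DD riemannPhiAux.XX
    fun_prop
  obtain ⟨t₀, -, hmin⟩ := (isCompact_Icc (a := (-1:ℝ)) (b := 1)).exists_isMinOn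
    (by norm_num : (Set.Icc (-1:ℝ) 1).Nonempty) hcont.continuousOn
  refine ⟨min ‖riemannPhiAux.DD c t₀‖ 1, lt_min (norm_pos_iff.mpr (riemannPhiAux.hDne c hc0 hc1 t₀)) one_pos, fun t => ?_⟩
  rcases le_or_gt |t| 1 with ht | ht
  · exact le_trans (min_le_left _ _) (hmin (abs_le.mp ht))
  · refine le_trans (min_le_right _ _) ?_
    -- |t| > 1 case : ‖riemannPhiAux.DD c t‖ ≥ 1
    set a : ℝ := Real.pi * (riemannPhiAux.w.im * t) with ha
    have h1 : ‖Complex.exp ((Real.pi:ℂ) * Complex.I * (riemannPhiAux.XX c t))‖ = Real.exp (-a) := by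
      rw [Complex.norm_exp]
      congr 1
      simp [Complex.mul_re, riemannPhiAux.hXim, ha]
    have h2 : ‖Complex.exp (-(Real.pi:ℂ) * Complex.I * (riemannPhiAux.XX c t))‖ = Real.exp a := by
      rw [Complex.norm_exp]
      congr 1
      simp [Complex.mul_re, riemannPhiAux.hXim, ha]
    have hb := abs_norm_sub_norm_le (Complex.exp ((Real.pi:ℂ) * Complex.I * (riemannPhiAux.XX c t)))
      (Complex.exp (-(Real.pi:ℂ) * Complex.I * (riemannPhiAux.XX c t)))
    rw [h1, h2] at hb
    rw [riemannPhiAux.DD]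
    refine le_trans ?_ hb
    -- 1 ≤ |exp (-a) - exp a|
    have hπ3 := Real.pi_gt_three
    have hwim' := riemannPhiAux.hwim
    rcases le_or_gt 0 t with htpos | htneg
    · have ht1 : 1 ≤ t := by rw [_root_.abs_of_nonneg htpos] at ht; linarith
      have ha1 : 1 ≤ a := by
        rw [ha]
        nlinarith [mul_le_mul hwim' ht1 (by norm_num : (0:ℝ) ≤ 1) (by linarith : (0:ℝ) ≤ riemannPhiAux.w.im)]
      have : Real.exp (-a) ≤ 1 := Real.exp_le_one_iff.mpr (by linarith)
      have h3 : a + 1 ≤ Real.exp a := Real.add_one_le_exp a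
      rw [abs_sub_comm, _root_.abs_of_nonneg (by linarith)]
      linarith
    · have ht1 : t ≤ -1 := by rw [_root_.abs_of_neg htneg] at ht; linarith
      have ha1 : a ≤ -1 := by
        rw [ha]
        nlinarith [mul_le_mul hwim' (by linarith : (1:ℝ) ≤ -t) (by norm_num : (0:ℝ) ≤ 1) (by linarith : (0:ℝ) ≤ riemannPhiAux.w.im)]
      have : Real.exp a ≤ 1 := Real.exp_le_one_iff.mpr (by linarith)
      have h3 : -a + 1 ≤ Real.exp (-a) := Real.add_one_le_exp (-a)
      rw [_root_.abs_of_nonneg (by linarith)]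
      linarith

lemma riemannPhiAux.hNint (c : ℝ) (v : ℂ) : Integrable (fun t : ℝ => riemannPhiAux.NN c v t) := by
  have h : (fun t : ℝ => riemannPhiAux.NN c v t) = fun t : ℝ =>
      Complex.exp ((-(Real.pi:ℂ)) * t^2 + (2*(Real.pi:ℂ)*Complex.I*(v-c)*riemannPhiAux.w)*t +
        (-(Real.pi:ℂ)*Complex.I*c^2 + 2*(Real.pi:ℂ)*Complex.I*v*c)) := by
    funext t; rw [riemannPhiAux.NN, riemannPhiAux.quad]
  rw [h]
  exact integrable_cexp_quadratic' (by simpa using Real.pi_pos) _ _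

lemma riemannPhiAux.hfint (c : ℝ) (hc0 : 0 < c) (hc1 : c < 1) (v : ℂ) :
    Integrable (fun t : ℝ => riemannPhiAux.NN c v t / riemannPhiAux.DD c t * riemannPhiAux.w) := by
  obtain ⟨m, hm, hlow⟩ := riemannPhiAux.hDlow c hc0 hc1
  refine Integrable.mono' ((riemannPhiAux.hNint c v).norm.const_mul m⁻¹) ?_ ?_
  · apply Continuous.aestronglyMeasurable
    apply Continuous.mul ?_ continuous_const
    apply Continuous.div
    · unfold riemannPhiAux.NN riemannPhiAux.XX; fun_prop
    · unfold riemannPhiAux.DD riemannPhiAux.XX; fun_prop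
    · exact fun t => riemannPhiAux.hDne c hc0 hc1 t
  · filter_upwards with t
    rw [norm_mul, riemannPhiAux.hwnorm, mul_one, norm_div, inv_mul_eq_div]
    gcongr
    exact hlow t

theorem stmt_1 (u : ℂ) (c : ℝ) (hc0 : 0 < c) (hc1 : c < 1) :
    Phi c (u + 1) - Phi c u =
      Complex.exp (Real.pi * Complex.I * (u + 1 / 2) ^ 2) *
        Complex.exp (3 * Real.pi * Complex.I / 4) := by
  have hPhi : ∀ v : ℂ, Phi c v = ∫ t : ℝ, riemannPhiAux.NN c v t / riemannPhiAux.DD c t * riemannPhiAux.w := fun v => rfl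
  rw [hPhi, hPhi, ← integral_sub (riemannPhiAux.hfint c hc0 hc1 (u+1)) (riemannPhiAux.hfint c hc0 hc1 u)]
  set B : ℂ := 2*(Real.pi:ℂ)*Complex.I*(u+1/2-c)*riemannPhiAux.w with hB
  set G : ℂ := -(Real.pi:ℂ)*Complex.I*c^2 + 2*(Real.pi:ℂ)*Complex.I*(u+1/2)*c with hG
  have hpt : ∀ t : ℝ, riemannPhiAux.NN c (u+1) t / riemannPhiAux.DD c t * riemannPhiAux.w - riemannPhiAux.NN c u t / riemannPhiAux.DD c t * riemannPhiAux.w =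
      Complex.exp ((-(Real.pi:ℂ)) * t^2 + B*t + G) * riemannPhiAux.w := by
    intro t
    have hD := riemannPhiAux.hDne c hc0 hc1 t
    have hND : riemannPhiAux.NN c (u+1) t - riemannPhiAux.NN c u t =
        Complex.exp ((-(Real.pi:ℂ)) * t^2 + B*t + G) * riemannPhiAux.DD c t := by
      rw [riemannPhiAux.NN, riemannPhiAux.NN, riemannPhiAux.DD, mul_sub, ← Complex.exp_add, ← Complex.exp_add]
      congr 1
      · congr 1
        rw [riemannPhiAux.quad c (u+1) t, hB, hG]
        simp only [riemannPhiAux.XX]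
        ring
      · congr 1
        rw [riemannPhiAux.quad c u t, hB, hG]
        simp only [riemannPhiAux.XX]
        ring
    calc riemannPhiAux.NN c (u+1) t / riemannPhiAux.DD c t * riemannPhiAux.w - riemannPhiAux.NN c u t / riemannPhiAux.DD c t * riemannPhiAux.w
        = (riemannPhiAux.NN c (u+1) t - riemannPhiAux.NN c u t) / riemannPhiAux.DD c t * riemannPhiAux.w := by ring
      _ = Complex.exp ((-(Real.pi:ℂ)) * t^2 + B*t + G) * riemannPhiAux.w := by
          rw [hND, mul_div_cancel_right₀ _ hD]
  rw [show (fun t:ℝ => riemannPhiAux.NN c (u+1) t / riemannPhiAux.DD c t * riemannPhiAux.w - riemannPhiAux.NN c u t / riemannPhiAux.DD c t * riemannPhiAux.w)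
        = fun t:ℝ => Complex.exp ((-(Real.pi:ℂ))*t^2 + B*t + G) * riemannPhiAux.w from funext hpt]
  rw [MeasureTheory.integral_mul_const,
    integral_cexp_quadratic (show (-(Real.pi:ℂ)).re < 0 by simpa using Real.pi_pos) B G]
  have hπ : (Real.pi:ℂ) ≠ 0 := Complex.ofReal_ne_zero.mpr Real.pi_ne_zero
  have h1 : ((Real.pi:ℂ) / -(-(Real.pi:ℂ))) = 1 := by
    rw [neg_neg]; exact div_self hπ
  rw [h1, Complex.one_cpow, one_mul]
  have hB2 : B^2 = 4*(Real.pi:ℂ)^2*Complex.I*(u+1/2-↑c)^2 := by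
    rw [hB]
    linear_combination (4*(Real.pi:ℂ)^2*(u+1/2-(c:ℂ))^2*Complex.I^2) * riemannPhiAux.hw2 +
      (-(4*(Real.pi:ℂ)^2*(u+1/2-(c:ℂ))^2*Complex.I)) * Complex.I_sq
  congr 2
  rw [hG, hB2]
  field_simp
  ring
end

section
/- For every complex number s with Re s > 1 and every natural number m ≥ 1, the Riemann zeta function satisfies ζ(s) = Σ_{n=1}^{m} n^{-s} + (1/Γ(s)) ∫_0^∞ x^{s−1} e^{-mx}/(e^x − 1) dx. -/
open Complex MeasureTheory

theorem stmt_6 (s : ℂ) (hs : 1 < s.re) (m : ℕ) (hm : 1 ≤ m) :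
    riemannZeta s = ∑ n ∈ Finset.Icc 1 m, (n : ℂ) ^ (-s) +
      (1 / Complex.Gamma s) *
        ∫ x in Set.Ioi (0 : ℝ),
          (x : ℂ) ^ (s - 1) * Complex.exp (-(m : ℂ) * x) / (Complex.exp x - 1) := by
  have hs0 : 0 < s.re := by linarith
  have hΓ : Complex.Gamma s ≠ 0 := Complex.Gamma_ne_zero_of_re_pos hs0
  set F : ℝ → ℂ := fun x ↦ Complex.exp (-(m : ℂ) * x) / (Complex.exp x - 1) with hF
  set p : ℕ → ℝ := fun i ↦ (i : ℝ) + m + 1 with hp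
  have hppos : ∀ i, (0 : ℝ) < p i := by
    intro i; simp only [hp]; positivity
  -- key Mellin = Dirichlet series step
  have hmel : HasSum (fun i : ℕ ↦ Complex.Gamma s * (1 : ℂ) / (p i : ℂ) ^ s) (mellin F s) := by
    apply hasSum_mellin (fun i ↦ Or.inr (hppos i)) hs0
    · intro t ht
      rw [Set.mem_Ioi] at ht
      have hgeo : HasSum (fun i : ℕ ↦ Real.exp (-((m : ℝ) + 1) * t) * Real.exp (-t) ^ i)
          (Real.exp (-((m : ℝ) + 1) * t) * (1 - Real.exp (-t))⁻¹) :=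
        (hasSum_geometric_of_lt_one (Real.exp_nonneg _)
          (Real.exp_lt_one_iff.mpr (by linarith))).mul_left _
      have hval : (Real.exp (-((m : ℝ) + 1) * t) * (1 - Real.exp (-t))⁻¹ : ℝ) =
          Real.exp (-(m : ℝ) * t) / (Real.exp t - 1) := by
        have hden : 1 - Real.exp (-t) = Real.exp (-t) * (Real.exp t - 1) := by
          rw [mul_sub, ← Real.exp_add, neg_add_cancel, Real.exp_zero, mul_one]
        have hnum : Real.exp (-((m : ℝ) + 1) * t) = Real.exp (-t) * Real.exp (-(m : ℝ) * t) := by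
          rw [← Real.exp_add]; ring_nf
        rw [← div_eq_mul_inv, hnum, hden, mul_div_mul_left _ _ (Real.exp_ne_zero _)]
      have key := (Complex.hasSum_ofReal.mpr hgeo)
      rw [hval] at key
      have hFt : F t = ((Real.exp (-(m : ℝ) * t) / (Real.exp t - 1) : ℝ) : ℂ) := by
        simp only [hF]
        push_cast [Complex.ofReal_exp]
        ring_nf
      rw [hFt]
      convert key using 1
      funext i
      rw [one_mul]
      push_cast [← Real.exp_nat_mul, ← Real.exp_add]
      congr 2
      simp only [hp]
      push_cast
      ring
    · apply Summable.congr ((summable_nat_add_iff (m + 1)).mpr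
        (Real.summable_one_div_nat_rpow.mpr hs))
      intro i
      simp only [hp, norm_one]
      congr 2
      push_cast
      ring
  -- rewrite zeta as head sum + tail
  have hsum : Summable (fun n : ℕ ↦ 1 / ((n : ℂ) + 1) ^ s) := by
    apply Summable.congr ((summable_nat_add_iff 1).mpr
      (Complex.summable_one_div_nat_cpow.mpr hs))
    intro n; push_cast; ring_nf
  rw [zeta_eq_tsum_one_div_nat_add_one_cpow hs, ← hsum.sum_add_tsum_nat_add m]
  congr 1
  · rw [show Finset.Icc 1 m = Finset.Ico 1 (m + 1) by rw [Finset.Ico_add_one_right_eq_Icc],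
      Finset.sum_Ico_eq_sum_range]
    simp only [Nat.add_sub_cancel]
    refine Finset.sum_congr rfl fun n _ ↦ ?_
    rw [cpow_neg]
    push_cast
    rw [one_div, add_comm]
  · have hint : mellin F s = ∫ x in Set.Ioi (0 : ℝ),
        (x : ℂ) ^ (s - 1) * Complex.exp (-(m : ℂ) * x) / (Complex.exp x - 1) := by
      simp only [mellin, hF, smul_eq_mul, mul_div_assoc]
    rw [← hint, ← hmel.tsum_eq, ← tsum_mul_left]
    refine tsum_congr fun n ↦ ?_
    have hc : ((p n : ℝ) : ℂ) = ((n + m : ℕ) : ℂ) + 1 := by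
      simp only [hp]; push_cast; ring
    rw [hc, mul_one]
    field_simp
end
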